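/- If F₁, F₂, ... are concave functions on an open convex set E ⊆ ℝᵖ converging pointwise to a function f : E → ℝ that has a unique maximizer x̂ ∈ E, and xₙ maximizes Fₙ over E, then the sequence (xₙ) converges to x̂ (deterministic version of the Andersen–Gill convexity lemma). -/

import Mathlib

/-!
Pointwise convergence of concave functions on an open set of `ℝᵖ` is automatically locally
uniform: a lower bound comes from the minimum principle on a small cube whose finitely many
vertices converge, and an upper bound at `w` from the midpoint inequality
`2 Fₙ(y) ≥ Fₙ(w) + Fₙ(2y - w)` together with that lower bound at the reflected point.
By compactness, eventually `Fₙ < Fₙ(x̂)` on a small sphere around `x̂`; since `Fₙ(xₙ) ≥ Fₙ(x̂)`,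
concavity along the segment from `x̂` to `xₙ` keeps `xₙ` inside that sphere.
-/

open Filter Set Metric Topology Function

theorem ConcaveOn.of_tendsto {α E : Type*} [AddCommGroup E] [Module ℝ E] {l : Filter α} [l.NeBot]
    {s : Set E} {F : α → E → ℝ} {f : E → ℝ} (hF : ∀ n, ConcaveOn ℝ s (F n))
    (hlim : ∀ y ∈ s, Tendsto (F · y) l (𝓝 (f y))) : ConcaveOn ℝ s f := by
  have : Nonempty α := l.nonempty_of_neBot
  have hs : Convex ℝ s := (hF (Classical.arbitrary α)).1
  refine ⟨hs, fun a ha b hb μ ν hμ hν hμν => ?_⟩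
  exact le_of_tendsto_of_tendsto' (((hlim a ha).const_mul μ).add ((hlim b hb).const_mul ν))
    (hlim _ (hs ha hb hμ hν hμν)) fun n => (hF n).2 ha hb hμ hν hμν

theorem ConcaveOn.exists_mem_sphere_le {V : Type*} [NormedAddCommGroup V] [NormedSpace ℝ V]
    {s : Set V} {F : V → ℝ} (hF : ConcaveOn ℝ s F) {a b : V} (ha : a ∈ s) (hb : b ∈ s)
    (hab : F a ≤ F b) {r : ℝ} (hr : 0 ≤ r) (hrb : r ≤ dist b a) :
    ∃ z ∈ sphere a r, F a ≤ F z := by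
  set t := r / dist a b
  have ht : t ∈ Icc (0 : ℝ) 1 :=
    ⟨div_nonneg hr dist_nonneg, div_le_one_of_le₀ (dist_comm a b ▸ hrb) dist_nonneg⟩
  refine ⟨AffineMap.lineMap a b t, ?_, ?_⟩
  · rw [mem_sphere, dist_lineMap_left, Real.norm_of_nonneg ht.1]
    exact div_mul_cancel_of_imp fun h => by rw [dist_comm, h] at hrb; linarith
  · simpa [min_eq_left hab] using
      hF.ge_on_segment ha hb (segment_eq_image_lineMap ℝ a b ▸ mem_image_of_mem _ ht)

section Pi

variable {ι : Type*} [Fintype ι]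

theorem pi_pair_subset_closedBall (y : ι → ℝ) {r : ℝ} (hr : 0 ≤ r) :
    univ.pi (fun i => ({y i - r, y i + r} : Set ℝ)) ⊆ closedBall y r := by
  intro v hv
  refine (dist_pi_le_iff hr).2 fun i => ?_
  obtain h | h : v i = y i - r ∨ v i = y i + r := hv i (mem_univ i) <;>
    simp [h, abs_of_nonneg hr]

theorem closedBall_subset_convexHull_pi_pair (y : ι → ℝ) {r : ℝ} (hr : 0 ≤ r) :
    closedBall y r ⊆ convexHull ℝ (univ.pi fun i => ({y i - r, y i + r} : Set ℝ)) := by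
  intro w hw
  refine mem_convexHull_pi fun i _ => ?_
  have h := abs_le.1 (Real.dist_eq _ _ ▸ (dist_pi_le_iff hr).1 hw i)
  rw [convexHull_pair, segment_eq_Icc (by linarith)]
  constructor <;> linarith [h.1, h.2]

variable {α : Type*} {l : Filter α} {s : Set (ι → ℝ)} {F : α → (ι → ℝ) → ℝ} {f : (ι → ℝ) → ℝ}

theorem eventually_gt_of_concaveOn_of_tendsto (hF : ∀ n, ConcaveOn ℝ s (F n))
    (hlim : ∀ y ∈ s, Tendsto (F · y) l (𝓝 (f y))) {y : ι → ℝ} (hs : s ∈ 𝓝 y)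
    (hf : ContinuousAt f y) {m : ℝ} (hm : m < f y) :
    ∀ᶠ q in l ×ˢ 𝓝 y, m < F q.1 q.2 := by
  obtain ⟨r, hr, hball⟩ := nhds_basis_closedBall.mem_iff.1
    (inter_mem hs (hf.eventually (eventually_gt_nhds hm)))
  set V := univ.pi fun i => ({y i - r, y i + r} : Set ℝ)
  have hVball : V ⊆ closedBall y r := pi_pair_subset_closedBall y hr.le
  have hVfin : V.Finite := Set.Finite.pi fun i => (finite_singleton _).insert _
  have hV : ∀ᶠ n in l, ∀ v ∈ V, m < F n v :=
    (eventually_all_finite hVfin).2 fun v hv =>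
      (hlim v (hball (hVball hv)).1).eventually (eventually_gt_nhds (hball (hVball hv)).2)
  filter_upwards [hV.prod_mk (closedBall_mem_nhds y hr)] with ⟨n, w⟩ ⟨hn, hw⟩
  obtain ⟨v, hv, hvw⟩ := (hF n).exists_le_of_mem_convexHull (fun v hv => (hball (hVball hv)).1)
    (closedBall_subset_convexHull_pi_pair y hr.le hw)
  exact (hn v hv).trans_le hvw

theorem eventually_lt_of_concaveOn_of_tendsto (hF : ∀ n, ConcaveOn ℝ s (F n))
    (hlim : ∀ y ∈ s, Tendsto (F · y) l (𝓝 (f y))) {y : ι → ℝ} (hs : s ∈ 𝓝 y)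
    (hf : ContinuousAt f y) {M : ℝ} (hM : f y < M) :
    ∀ᶠ q in l ×ˢ 𝓝 y, F q.1 q.2 < M := by
  set δ := M - f y
  have hreflect : Tendsto (Prod.map id fun w => y + (y - w)) (l ×ˢ 𝓝 y) (l ×ˢ 𝓝 y) :=
    have : Tendsto (fun w => y + (y - w)) (𝓝 y) (𝓝 (y + (y - y))) :=
      tendsto_const_nhds.add (tendsto_const_nhds.sub tendsto_id)
    tendsto_id.prodMap (by simpa using this)
  have hlower := eventually_gt_of_concaveOn_of_tendsto hF hlim hs hf
    (by linarith : f y - δ / 2 < f y)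
  have hcentre : ∀ᶠ n in l, F n y < f y + δ / 4 :=
    (hlim y (mem_of_mem_nhds hs)).eventually (eventually_lt_nhds (by linarith))
  have hreflected : ∀ᶠ q in l ×ˢ 𝓝 y,
      f y - δ / 2 < F q.1 (y + (y - q.2)) ∧ y + (y - q.2) ∈ s :=
    hreflect.eventually (hlower.and (Eventually.prod_inr hs l))
  filter_upwards [hreflected, hcentre.prod_inl _, Eventually.prod_inr hs l]
    with q ⟨hq'low, hq'⟩ hqy hq
  have hmid := (hF q.1).2 hq hq' (by norm_num : (0 : ℝ) ≤ 1 / 2) (by norm_num : (0 : ℝ) ≤ 1 / 2)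
    (by norm_num)
  rw [show (1 / 2 : ℝ) • q.2 + (1 / 2 : ℝ) • (y + (y - q.2)) = y by module, smul_eq_mul,
    smul_eq_mul] at hmid
  linarith

theorem tendsto_uncurry_of_concaveOn_of_tendsto [l.NeBot] (hs : IsOpen s)
    (hF : ∀ n, ConcaveOn ℝ s (F n)) (hlim : ∀ y ∈ s, Tendsto (F · y) l (𝓝 (f y)))
    {y : ι → ℝ} (hy : y ∈ s) : Tendsto (uncurry F) (l ×ˢ 𝓝 y) (𝓝 (f y)) := by
  have hf : ContinuousAt f y :=
    ((ConcaveOn.of_tendsto hF hlim).continuousOn hs).continuousAt (hs.mem_nhds hy)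
  exact tendsto_order.2 ⟨fun m hm => eventually_gt_of_concaveOn_of_tendsto hF hlim
    (hs.mem_nhds hy) hf hm, fun M hM => eventually_lt_of_concaveOn_of_tendsto hF hlim
    (hs.mem_nhds hy) hf hM⟩

end Pi

theorem IsCompact.eventually_forall_lt_of_tendsto_uncurry {α X : Type*} [TopologicalSpace X]
    {l : Filter α} {F : α → X → ℝ} {f : X → ℝ} {K : Set X} (hK : IsCompact K)
    (hFK : ∀ z ∈ K, Tendsto (uncurry F) (l ×ˢ 𝓝 z) (𝓝 (f z))) {a : X}
    (ha : Tendsto (F · a) l (𝓝 (f a))) (hlt : ∀ z ∈ K, f z < f a) :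
    ∀ᶠ n in l, ∀ z ∈ K, F n z < F n a := by
  have hloc : ∀ z ∈ K, ∀ᶠ q in l ×ˢ 𝓝 z, F q.1 q.2 < F q.1 a := fun z hz => by
    obtain ⟨m, hzm, hma⟩ := exists_between (hlt z hz)
    filter_upwards [(hFK z hz).eventually (eventually_lt_nhds hzm),
      (ha.eventually (eventually_gt_nhds hma)).prod_inl _] with q h1 h2 using h1.trans h2
  exact (Eventually.curry (hK.mem_prod_nhdsSet_of_forall hloc)).mono fun n hn =>
    hn.self_of_nhdsSet

theorem andersen_gill_convexity_lemma_general
    {p : ℕ} (E : Set (Fin p → ℝ)) (hEopen : IsOpen E)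
    (F : ℕ → (Fin p → ℝ) → ℝ) (hFconc : ∀ n, ConcaveOn ℝ E (F n))
    (f : (Fin p → ℝ) → ℝ)
    (hconv : ∀ y ∈ E, Tendsto (fun n => F n y) atTop (nhds (f y)))
    (xhat : Fin p → ℝ) (hxhatE : xhat ∈ E)
    (hmax : ∀ y ∈ E, y ≠ xhat → f y < f xhat)
    (x : ℕ → Fin p → ℝ) (hxE : ∀ n, x n ∈ E)
    (hxmax : ∀ n, ∀ y ∈ E, F n y ≤ F n (x n)) :
    Tendsto x atTop (nhds xhat) := by
  refine Metric.tendsto_nhds.2 fun ε' hε' => ?_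
  obtain ⟨ε, hε, hεε', hball⟩ : ∃ ε > 0, ε ≤ ε' ∧ closedBall xhat ε ⊆ E := by
    obtain ⟨r, hr, hrE⟩ := nhds_basis_closedBall.mem_iff.1 (hEopen.mem_nhds hxhatE)
    exact ⟨min r ε', lt_min hr hε', min_le_right _ _,
      (closedBall_subset_closedBall (min_le_left _ _)).trans hrE⟩
  have hsphereE : sphere xhat ε ⊆ E := sphere_subset_closedBall.trans hball
  have hsphere : ∀ᶠ n in atTop, ∀ z ∈ sphere xhat ε, F n z < F n xhat :=
    (isCompact_sphere xhat ε).eventually_forall_lt_of_tendsto_uncurry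
      (fun z hz => tendsto_uncurry_of_concaveOn_of_tendsto hEopen hFconc hconv (hsphereE hz))
      (hconv xhat hxhatE) fun z hz => hmax z (hsphereE hz) (ne_of_mem_sphere hz hε.ne')
  filter_upwards [hsphere] with n hn
  by_contra! hfar
  obtain ⟨z, hz, hle⟩ := (hFconc n).exists_mem_sphere_le hxhatE (hxE n)
    (hxmax n xhat hxhatE) hε.le (hεε'.trans hfar)
  exact (hn z hz).not_ge hle

/-- Deterministic version of the Andersen–Gill convexity lemma: if concave
functions `F n` on an open convex set `E ⊆ ℝᵖ` converge pointwise to `f`,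
which has a unique maximizer `x̂ ∈ E`, and `x n` maximizes `F n` over `E`,
then `x n → x̂`. -/
theorem andersen_gill_convexity_lemma
    {p : ℕ} (E : Set (Fin p → ℝ)) (hEopen : IsOpen E) (hEconv : Convex ℝ E)
    (F : ℕ → (Fin p → ℝ) → ℝ) (hFconc : ∀ n, ConcaveOn ℝ E (F n))
    (f : (Fin p → ℝ) → ℝ)
    (hconv : ∀ y ∈ E, Tendsto (fun n => F n y) atTop (nhds (f y)))
    (xhat : Fin p → ℝ) (hxhatE : xhat ∈ E)
    (hmax : ∀ y ∈ E, y ≠ xhat → f y < f xhat)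
    (x : ℕ → Fin p → ℝ) (hxE : ∀ n, x n ∈ E)
    (hxmax : ∀ n, ∀ y ∈ E, F n y ≤ F n (x n)) :
    Tendsto x atTop (nhds xhat) :=
  andersen_gill_convexity_lemma_general E hEopen F hFconc f hconv xhat hxhatE hmax x hxE hxmax
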